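/- Define σ : ℝ → ℝ by σ(t) = (1/(2π)) ∫₀^∞ r · e^{−r² t} · tanh(π r) dr. Then for every ε > 0, the quotient e^{−ε t} / σ(t) tends to 0 as t → ∞ (i.e. Tendsto (fun t => Real.exp (−ε·t) / σ t) atTop (𝓝 0)). -/

import Mathlib

open MeasureTheory Filter Real

noncomputable def sigmaSTF (t : ℝ) : ℝ :=
  (1 / (2 * Real.pi)) * ∫ r in Set.Ioi (0 : ℝ), r * Real.exp (-r ^ 2 * t) * Real.tanh (Real.pi * r)

lemma tanh_pos' {x : ℝ} (hx : 0 < x) : 0 < Real.tanh x := by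
  rw [Real.tanh_eq_sinh_div_cosh]
  exact div_pos (Real.sinh_pos_iff.2 hx) (Real.cosh_pos x)

lemma abs_tanh_le_one' (x : ℝ) : |Real.tanh x| ≤ 1 := by
  rw [Real.tanh_eq_sinh_div_cosh, abs_div, abs_of_pos (Real.cosh_pos x),
    div_le_one (Real.cosh_pos x), abs_le]
  constructor
  · nlinarith [Real.cosh_sq x, Real.sinh_sq x, Real.cosh_pos x, sq_nonneg (Real.sinh x + Real.cosh x)]
  · nlinarith [Real.cosh_sq x, Real.cosh_pos x, sq_nonneg (Real.sinh x - Real.cosh x)]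

lemma tanh_le_tanh' {x y : ℝ} (hxy : x ≤ y) : Real.tanh x ≤ Real.tanh y := by
  rw [Real.tanh_eq_sinh_div_cosh, Real.tanh_eq_sinh_div_cosh,
    div_le_div_iff₀ (Real.cosh_pos x) (Real.cosh_pos y)]
  have h : Real.sinh (x - y) ≤ 0 := by
    rw [show (0:ℝ) = Real.sinh 0 by simp, Real.sinh_le_sinh]
    linarith
  rw [Real.sinh_sub] at h
  linarith

lemma integrableOn_sigma {t : ℝ} (ht : 0 < t) :
    IntegrableOn (fun r : ℝ => r * Real.exp (-r ^ 2 * t) * Real.tanh (Real.pi * r))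
      (Set.Ioi (0 : ℝ)) := by
  have hint : Integrable (fun x : ℝ => x * Real.exp (-t * x ^ 2)) :=
    integrable_mul_exp_neg_mul_sq ht
  have hint' : IntegrableOn (fun x : ℝ => x * Real.exp (-t * x ^ 2)) (Set.Ioi (0 : ℝ)) :=
    hint.integrableOn
  refine hint'.mono' ?_ ?_
  · have hct : Continuous Real.tanh := by
      have : Real.tanh = fun x => Real.sinh x / Real.cosh x :=
        funext fun x => Real.tanh_eq_sinh_div_cosh x
      rw [this]
      exact Real.continuous_sinh.div Real.continuous_cosh fun x => (Real.cosh_pos x).ne'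
    exact ((continuous_id.mul (Real.continuous_exp.comp
      (((continuous_pow 2).neg).mul continuous_const))).mul
      (hct.comp (continuous_const.mul continuous_id))).aestronglyMeasurable
  · filter_upwards [ae_restrict_mem measurableSet_Ioi] with x hx
    have hx0 : (0:ℝ) < x := hx
    have h1 : |Real.tanh (Real.pi * x)| ≤ 1 := abs_tanh_le_one' _
    have h2 : 0 ≤ x * Real.exp (-x ^ 2 * t) := by positivity
    calc ‖x * Real.exp (-x ^ 2 * t) * Real.tanh (Real.pi * x)‖
        = x * Real.exp (-x ^ 2 * t) * |Real.tanh (Real.pi * x)| := by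
          rw [norm_mul, Real.norm_eq_abs, Real.norm_eq_abs, abs_mul,
            abs_of_pos hx0, abs_of_pos (Real.exp_pos _)]
      _ ≤ x * Real.exp (-x ^ 2 * t) * 1 := by
          exact mul_le_mul_of_nonneg_left h1 h2
      _ = x * Real.exp (-t * x ^ 2) := by ring_nf

theorem stmt_4 (ε : ℝ) (hε : 0 < ε) :
    Tendsto (fun t : ℝ => Real.exp (-ε * t) / sigmaSTF t) atTop (nhds 0) := by
  set a : ℝ := Real.sqrt (ε / 2) with ha
  have ha0 : 0 < a := Real.sqrt_pos.2 (by linarith)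
  have hasq : a ^ 2 = ε / 2 := Real.sq_sqrt (by linarith)
  have htanh : 0 < Real.tanh (Real.pi * (a / 2)) :=
    tanh_pos' (by positivity)
  set K : ℝ := (1 / (2 * Real.pi)) * (a / 2 * Real.exp 0 * Real.tanh (Real.pi * (a / 2)) * 0 + 1) with hKdummy
  clear_value K
  clear hKdummy
  -- define genuine K
  set K' : ℝ := (1 / (2 * Real.pi)) * (a / 2 * Real.tanh (Real.pi * (a / 2)) * (a / 2)) with hK'
  have hK'pos : 0 < K' := by
    have := Real.pi_pos
    positivity
  -- key lower bound
  have key : ∀ t : ℝ, 1 ≤ t → K' * Real.exp (-(ε / 2) * t) ≤ sigmaSTF t := by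
    intro t ht
    have ht0 : 0 < t := by linarith
    have hint := integrableOn_sigma ht0
    have hsub : Set.Ioc (a / 2) a ⊆ Set.Ioi (0 : ℝ) := by
      intro x hx
      have : a / 2 < x := hx.1
      simp only [Set.mem_Ioi]
      linarith
    have hnn : (0 : ℝ → ℝ) ≤ᵐ[volume.restrict (Set.Ioi (0:ℝ))]
        (fun r : ℝ => r * Real.exp (-r ^ 2 * t) * Real.tanh (Real.pi * r)) := by
      filter_upwards [ae_restrict_mem measurableSet_Ioi] with x hx
      have hx0 : (0:ℝ) < x := hx
      have := tanh_pos' (show (0:ℝ) < Real.pi * x by positivity)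
      positivity
    have step1 : ∫ r in Set.Ioc (a / 2) a,
        r * Real.exp (-r ^ 2 * t) * Real.tanh (Real.pi * r) ≤
        ∫ r in Set.Ioi (0:ℝ), r * Real.exp (-r ^ 2 * t) * Real.tanh (Real.pi * r) :=
      setIntegral_mono_set hint hnn (HasSubset.Subset.eventuallyLE hsub)
    have step2 : (a / 2 * Real.tanh (Real.pi * (a / 2)) * Real.exp (-(ε / 2) * t)) *
        (volume (Set.Ioc (a / 2) a)).toReal ≤
        ∫ r in Set.Ioc (a / 2) a, r * Real.exp (-r ^ 2 * t) * Real.tanh (Real.pi * r) := by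
      apply setIntegral_ge_of_const_le_real measurableSet_Ioc (by simp)
      · intro x hx
        have hx1 : a / 2 < x := hx.1
        have hx2 : x ≤ a := hx.2
        have hx0 : 0 < x := lt_trans (by positivity) hx1
        have hexp : Real.exp (-(ε / 2) * t) ≤ Real.exp (-x ^ 2 * t) := by
          apply Real.exp_le_exp.2
          have hxsq : x ^ 2 ≤ a ^ 2 := by nlinarith
          nlinarith
        have htanh2 : Real.tanh (Real.pi * (a / 2)) ≤ Real.tanh (Real.pi * x) := by
          apply tanh_le_tanh'
          nlinarith [Real.pi_pos]
        calc a / 2 * Real.tanh (Real.pi * (a / 2)) * Real.exp (-(ε / 2) * t)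
            ≤ x * Real.tanh (Real.pi * (a / 2)) * Real.exp (-(ε / 2) * t) := by
              apply mul_le_mul_of_nonneg_right (mul_le_mul_of_nonneg_right hx1.le htanh.le)
                (Real.exp_pos _).le
          _ ≤ x * Real.tanh (Real.pi * x) * Real.exp (-(ε / 2) * t) := by
              apply mul_le_mul_of_nonneg_right (mul_le_mul_of_nonneg_left htanh2 hx0.le)
                (Real.exp_pos _).le
          _ ≤ x * Real.tanh (Real.pi * x) * Real.exp (-x ^ 2 * t) := by
              apply mul_le_mul_of_nonneg_left hexp
              have := tanh_pos' (show (0:ℝ) < Real.pi * x by positivity)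
              positivity
          _ = x * Real.exp (-x ^ 2 * t) * Real.tanh (Real.pi * x) := by ring
      · exact hint.mono_set hsub
    have hvol : (volume (Set.Ioc (a / 2) a)).toReal = a / 2 := by
      rw [Real.volume_Ioc, ENNReal.toReal_ofReal (by linarith)]
      ring
    rw [hvol] at step2
    have hfinal : (a / 2 * Real.tanh (Real.pi * (a / 2)) * Real.exp (-(ε / 2) * t)) * (a / 2) ≤
        ∫ r in Set.Ioi (0:ℝ), r * Real.exp (-r ^ 2 * t) * Real.tanh (Real.pi * r) :=
      le_trans step2 step1
    have hpi : 0 < 1 / (2 * Real.pi) := by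
      have := Real.pi_pos; positivity
    unfold sigmaSTF
    calc K' * Real.exp (-(ε / 2) * t)
        = (1 / (2 * Real.pi)) * ((a / 2 * Real.tanh (Real.pi * (a / 2)) * Real.exp (-(ε / 2) * t)) * (a / 2)) := by
          rw [hK']; ring
      _ ≤ (1 / (2 * Real.pi)) * ∫ r in Set.Ioi (0:ℝ),
            r * Real.exp (-r ^ 2 * t) * Real.tanh (Real.pi * r) := by
          exact mul_le_mul_of_nonneg_left hfinal hpi.le
  -- squeeze
  have hupper : Tendsto (fun t : ℝ => (1 / K') * Real.exp (-(ε / 2) * t)) atTop (nhds 0) := by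
    rw [show (0:ℝ) = (1 / K') * 0 by ring]
    apply Tendsto.const_mul
    have : Tendsto (fun t : ℝ => (ε / 2) * t) atTop atTop :=
      Tendsto.const_mul_atTop (by linarith) tendsto_id
    have h2 := (Real.tendsto_exp_neg_atTop_nhds_zero).comp this
    have heq : (fun t : ℝ => Real.exp (-(ε / 2) * t)) =
        (fun x => Real.exp (-x)) ∘ fun t => ε / 2 * t := by
      funext t; simp [Function.comp, neg_mul]
    rw [heq]
    exact h2
  apply tendsto_of_tendsto_of_tendsto_of_le_of_le' tendsto_const_nhds hupper
  · filter_upwards [eventually_ge_atTop (1:ℝ)] with t ht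
    have hσ : 0 < sigmaSTF t :=
      lt_of_lt_of_le (by positivity) (key t ht)
    positivity
  · filter_upwards [eventually_ge_atTop (1:ℝ)] with t ht
    have hσ : K' * Real.exp (-(ε / 2) * t) ≤ sigmaSTF t := key t ht
    have hKe : 0 < K' * Real.exp (-(ε / 2) * t) := by positivity
    calc Real.exp (-ε * t) / sigmaSTF t
        ≤ Real.exp (-ε * t) / (K' * Real.exp (-(ε / 2) * t)) :=
          div_le_div_of_nonneg_left (Real.exp_pos _).le hKe hσ
      _ = (1 / K') * Real.exp (-(ε / 2) * t) := by
          have : Real.exp (-ε * t) = Real.exp (-(ε/2) * t) * Real.exp (-(ε/2) * t) := by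
            rw [← Real.exp_add]; ring_nf
          rw [this]
          field_simp
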